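/- Define S(n) as the number of lazy paths of size n of height and depth bounded by 1 such that every factor immediately preceding a (2,0) step or preceding the end of the path is negative. Then S(n) = 3S(n−1) − S(n−2) for n ≥ 2, i.e., S(n) = F_{2n+1}, the odd-indexed Fibonacci number. -/
import Mathlib


/-- Steps of a lazy path: `(1,1)`, `(1,-1)` and `(2,0)`. -/
inductive LStep : Type
  | up | down | flat
deriving DecidableEq

/-- Vertical displacement of a step. -/
def LStep.dy : LStep → ℤ
  | .up => 1
  | .down => -1
  | .flat => 0

/-- Horizontal displacement of a step. -/
def LStep.dx : LStep → ℕ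
  | .up => 1
  | .down => 1
  | .flat => 2

/-- Height reached after performing the steps of `l`, starting from `0`. -/
def pathHeight (l : List LStep) : ℤ := (l.map LStep.dy).sum

/-- A lazy path of size `n`: it goes from `(0,0)` to `(2n,0)` with steps
`(1,1)`, `(1,-1)`, `(2,0)`, the `(2,0)` steps occurring only on the x-axis. -/
def IsLazyPath (n : ℕ) (l : List LStep) : Prop :=
  (l.map LStep.dx).sum = 2 * n ∧ pathHeight l = 0 ∧
    ∀ (i : ℕ) (h : i < l.length), l[i] = LStep.flat → pathHeight (l.take i) = 0

/-- An "odd Frobenius" path: a lazy path of height and depth bounded by `1`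
in which every (non-flat) factor immediately preceding a `(2,0)` step or the
end of the path is negative, i.e. such a factor returns to the axis with an
up step. -/
def IsOddFrobenius (n : ℕ) (l : List LStep) : Prop :=
  IsLazyPath n l ∧
  (∀ i : ℕ, -1 ≤ pathHeight (l.take i) ∧ pathHeight (l.take i) ≤ 1) ∧
  (∀ (i : ℕ) (h : i < l.length), l[i] ≠ LStep.flat →
    pathHeight (l.take (i + 1)) = 0 →
    (i + 1 = l.length ∨ ∃ h2 : i + 1 < l.length, l[i + 1] = LStep.flat) →
    l[i] = LStep.up)

instance : Fintype LStep := ⟨{.up, .down, .flat}, fun x => by cases x <;> simp⟩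

lemma pathHeight_nil : pathHeight ([] : List LStep) = 0 := rfl

lemma pathHeight_cons (a : LStep) (l : List LStep) :
    pathHeight (a :: l) = a.dy + pathHeight l := by simp [pathHeight]

lemma length_le_dxsum (l : List LStep) : l.length ≤ (l.map LStep.dx).sum := by
  induction l with
  | nil => simp
  | cons a t ih =>
    have : 1 ≤ a.dx := by cases a <;> decide
    simp only [List.length_cons, List.map_cons, List.sum_cons]
    omega

lemma frob_nil {n : ℕ} : IsOddFrobenius n [] ↔ n = 0 := by
  constructor
  · rintro ⟨⟨hdx, -, -⟩, -, -⟩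
    simp at hdx; omega
  · rintro rfl
    refine ⟨⟨by simp, rfl, by simp⟩, fun i => by simp [pathHeight], by simp⟩

lemma frob_flat_cons {n : ℕ} {t : List LStep} :
    IsOddFrobenius (n + 1) (.flat :: t) ↔ IsOddFrobenius n t := by
  constructor
  · rintro ⟨⟨hdx, hh, hfl⟩, hbd, hfr⟩
    refine ⟨⟨?_, ?_, ?_⟩, ?_, ?_⟩
    · simp [LStep.dx] at hdx; omega
    · simpa [pathHeight_cons, LStep.dy] using hh
    · intro i hi hf
      have := hfl (i + 1) (by simpa using Nat.succ_lt_succ hi) (by simpa using hf)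
      simpa [pathHeight_cons, LStep.dy] using this
    · intro i
      have := hbd (i + 1)
      simpa [pathHeight_cons, LStep.dy] using this
    · intro i hi hne hret hend
      have := hfr (i + 1) (by simpa using Nat.succ_lt_succ hi) (by simpa using hne)
        (by simpa [pathHeight_cons, LStep.dy] using hret)
        (by rcases hend with h | ⟨h2, hf⟩
            · left; simpa using h
            · right; exact ⟨by simpa using Nat.succ_lt_succ h2, by simpa using hf⟩)
      simpa using this
  · rintro ⟨⟨hdx, hh, hfl⟩, hbd, hfr⟩
    refine ⟨⟨?_, ?_, ?_⟩, ?_, ?_⟩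
    · simp [LStep.dx, hdx]; omega
    · simp [pathHeight_cons, LStep.dy, hh]
    · intro i hi hf
      rcases i with _ | j
      · simp [pathHeight]
      · have := hfl j (by simpa using Nat.lt_of_succ_lt_succ hi) (by simpa using hf)
        simpa [pathHeight_cons, LStep.dy] using this
    · intro i
      rcases i with _ | j
      · simp [pathHeight]
      · have := hbd j
        simpa [pathHeight_cons, LStep.dy] using this
    · intro i hi hne hret hend
      rcases i with _ | j
      · simp at hne
      · have := hfr j (by simpa using Nat.lt_of_succ_lt_succ hi) (by simpa using hne)
          (by simpa [pathHeight_cons, LStep.dy] using hret)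
          (by rcases hend with h | ⟨h2, hf⟩
              · left; simpa using h
              · right; exact ⟨by simpa using Nat.lt_of_succ_lt_succ h2, by simpa using hf⟩)
        simpa using this

lemma frob_du_cons {n : ℕ} {t : List LStep} :
    IsOddFrobenius (n + 1) (.down :: .up :: t) ↔ IsOddFrobenius n t := by
  constructor
  · rintro ⟨⟨hdx, hh, hfl⟩, hbd, hfr⟩
    refine ⟨⟨?_, ?_, ?_⟩, ?_, ?_⟩
    · simp [LStep.dx] at hdx; omega
    · have := hh; simp [pathHeight_cons, LStep.dy] at this ⊢; omega
    · intro i hi hf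
      have := hfl (i + 2) (by simpa using Nat.succ_lt_succ (Nat.succ_lt_succ hi))
        (by simpa using hf)
      simp [pathHeight_cons, LStep.dy] at this ⊢; omega
    · intro i
      have := hbd (i + 2)
      simp [pathHeight_cons, LStep.dy] at this ⊢; omega
    · intro i hi hne hret hend
      have := hfr (i + 2) (by simpa using Nat.succ_lt_succ (Nat.succ_lt_succ hi))
        (by simpa using hne)
        (by simp [pathHeight_cons, LStep.dy] at hret ⊢; omega)
        (by rcases hend with h | ⟨h2, hf⟩
            · left; simpa using h
            · right
              exact ⟨by simpa using Nat.succ_lt_succ (Nat.succ_lt_succ h2), by simpa using hf⟩)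
      simpa using this
  · rintro ⟨⟨hdx, hh, hfl⟩, hbd, hfr⟩
    refine ⟨⟨?_, ?_, ?_⟩, ?_, ?_⟩
    · simp [LStep.dx, hdx]; omega
    · simp [pathHeight_cons, LStep.dy, hh]
    · intro i hi hf
      rcases i with _ | _ | j
      · simp at hf
      · simp at hf
      · have := hfl j (by simpa using Nat.lt_of_succ_lt_succ (Nat.lt_of_succ_lt_succ hi))
          (by simpa using hf)
        simp [pathHeight_cons, LStep.dy] at this ⊢; omega
    · intro i
      rcases i with _ | _ | j
      · simp [pathHeight]
      · simp [pathHeight, pathHeight_cons, LStep.dy]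
      · have := hbd j
        simp [pathHeight_cons, LStep.dy] at this ⊢; omega
    · intro i hi hne hret hend
      rcases i with _ | _ | j
      · exfalso
        simp [pathHeight, pathHeight_cons, LStep.dy] at hret
      · simp
      · have := hfr j (by simpa using Nat.lt_of_succ_lt_succ (Nat.lt_of_succ_lt_succ hi))
          (by simpa using hne)
          (by simp [pathHeight_cons, LStep.dy] at hret ⊢; omega)
          (by rcases hend with h | ⟨h2, hf⟩
              · left; simp at h; omega
              · right
                exact ⟨by simpa using Nat.lt_of_succ_lt_succ (Nat.lt_of_succ_lt_succ h2),
                  by simpa using hf⟩)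
        simpa using this

lemma frob_ud_cons {n : ℕ} {t : List LStep} :
    IsOddFrobenius (n + 1) (.up :: .down :: t) ↔
      (IsOddFrobenius n t ∧ ∃ a r, t = a :: r ∧ a ≠ LStep.flat) := by
  constructor
  · rintro ⟨⟨hdx, hh, hfl⟩, hbd, hfr⟩
    have hkey : ¬ (2 = (LStep.up :: LStep.down :: t).length ∨
        ∃ h2 : 2 < (LStep.up :: LStep.down :: t).length,
          (LStep.up :: LStep.down :: t)[2] = LStep.flat) := by
      intro hor
      have := hfr 1 (by simp) (by simp) (by simp [pathHeight, pathHeight_cons, LStep.dy]) hor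
      simp at this
    have hne : ∃ a r, t = a :: r ∧ a ≠ LStep.flat := by
      rcases t with _ | ⟨a, r⟩
      · exact absurd (Or.inl (by simp)) hkey
      · refine ⟨a, r, rfl, fun ha => hkey (Or.inr ⟨by simp, by simpa using ha⟩)⟩
    refine ⟨⟨⟨?_, ?_, ?_⟩, ?_, ?_⟩, hne⟩
    · simp [LStep.dx] at hdx; omega
    · have := hh; simp [pathHeight_cons, LStep.dy] at this ⊢; omega
    · intro i hi hf
      have := hfl (i + 2) (by simpa using Nat.succ_lt_succ (Nat.succ_lt_succ hi))
        (by simpa using hf)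
      simp [pathHeight_cons, LStep.dy] at this ⊢; omega
    · intro i
      have := hbd (i + 2)
      simp [pathHeight_cons, LStep.dy] at this ⊢; omega
    · intro i hi hne' hret hend
      have := hfr (i + 2) (by simpa using Nat.succ_lt_succ (Nat.succ_lt_succ hi))
        (by simpa using hne')
        (by simp [pathHeight_cons, LStep.dy] at hret ⊢; omega)
        (by rcases hend with h | ⟨h2, hf⟩
            · left; simpa using h
            · right
              exact ⟨by simpa using Nat.succ_lt_succ (Nat.succ_lt_succ h2), by simpa using hf⟩)
      simpa using this
  · rintro ⟨⟨⟨hdx, hh, hfl⟩, hbd, hfr⟩, a, r, rfl, ha⟩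
    refine ⟨⟨?_, ?_, ?_⟩, ?_, ?_⟩
    · simp [LStep.dx, hdx] at hdx ⊢; omega
    · simp [pathHeight_cons, LStep.dy] at hh ⊢; omega
    · intro i hi hf
      rcases i with _ | _ | j
      · simp at hf
      · simp at hf
      · have := hfl j (by simpa using Nat.lt_of_succ_lt_succ (Nat.lt_of_succ_lt_succ hi))
          (by simpa using hf)
        simp [pathHeight_cons, LStep.dy] at this ⊢; omega
    · intro i
      rcases i with _ | _ | j
      · simp [pathHeight]
      · simp [pathHeight, pathHeight_cons, LStep.dy]
      · have := hbd j
        simp [pathHeight_cons, LStep.dy] at this ⊢; omega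
    · intro i hi hne' hret hend
      rcases i with _ | _ | j
      · exfalso
        simp [pathHeight, pathHeight_cons, LStep.dy] at hret
      · exfalso
        rcases hend with h | ⟨h2, hf⟩
        · simp at h
        · rcases a <;> simp at hf ha
      · have := hfr j (by simpa using Nat.lt_of_succ_lt_succ (Nat.lt_of_succ_lt_succ hi))
          (by simpa using hne')
          (by simp [pathHeight_cons, LStep.dy] at hret ⊢; omega)
          (by rcases hend with h | ⟨h2, hf⟩
              · left; simp at h ⊢; omega
              · right
                exact ⟨by simpa using Nat.lt_of_succ_lt_succ (Nat.lt_of_succ_lt_succ h2),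
                  by simpa using hf⟩)
        simpa using this

lemma frob_shape {n : ℕ} {l : List LStep} (h : IsOddFrobenius n l) :
    l = [] ∨ (∃ t, l = .flat :: t) ∨ (∃ t, l = .down :: .up :: t) ∨
      (∃ t, l = .up :: .down :: t) := by
  obtain ⟨⟨hdx, hh, hfl⟩, hbd, hfr⟩ := h
  rcases l with _ | ⟨a, t⟩
  · exact Or.inl rfl
  rcases a with _ | _ | _
  · -- up
    rcases t with _ | ⟨b, r⟩
    · exfalso; simp [pathHeight, LStep.dy] at hh
    rcases b with _ | _ | _
    · exfalso
      have := (hbd 2).2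
      simp [pathHeight, pathHeight_cons, LStep.dy] at this
    · exact Or.inr (Or.inr (Or.inr ⟨r, rfl⟩))
    · exfalso
      have := hfl 1 (by simp) (by simp)
      simp [pathHeight, pathHeight_cons, LStep.dy] at this
  · -- down
    rcases t with _ | ⟨b, r⟩
    · exfalso; simp [pathHeight, LStep.dy] at hh
    rcases b with _ | _ | _
    · exact Or.inr (Or.inr (Or.inl ⟨r, rfl⟩))
    · exfalso
      have := (hbd 2).1
      simp [pathHeight, pathHeight_cons, LStep.dy] at this
    · exfalso
      have := hfl 1 (by simp) (by simp)
      simp [pathHeight, pathHeight_cons, LStep.dy] at this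
  · exact Or.inr (Or.inl ⟨t, rfl⟩)

def Pset (n : ℕ) : Set (List LStep) := {l | IsOddFrobenius n l}

def Qset (n : ℕ) : Set (List LStep) := {l | IsOddFrobenius n l ∧ ∃ a t, l = a :: t ∧ a ≠ LStep.flat}

lemma Pset_finite (n : ℕ) : (Pset n).Finite := by
  refine (List.finite_length_le LStep (2 * n)).subset ?_
  intro l hl
  have h1 := length_le_dxsum l
  have h2 := hl.1.1
  simp only [Set.mem_setOf_eq]
  omega

lemma Qset_finite (n : ℕ) : (Qset n).Finite :=
  (Pset_finite n).subset fun _ h => h.1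

lemma Pset_zero : Pset 0 = {([] : List LStep)} := by
  ext l
  simp only [Pset, Set.mem_setOf_eq, Set.mem_singleton_iff]
  constructor
  · intro h
    have h1 := length_le_dxsum l
    have h2 := h.1.1
    rcases l with _ | ⟨a, t⟩
    · rfl
    · exfalso; simp at h1 h2; omega
  · rintro rfl; exact frob_nil.2 rfl

lemma Qset_zero : Qset 0 = ∅ := by
  ext l
  simp only [Qset, Set.mem_setOf_eq, Set.mem_empty_iff_false, iff_false, not_and]
  rintro h ⟨a, t, rfl, -⟩
  have h1 := length_le_dxsum (a :: t)
  have h2 := h.1.1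
  simp at h1 h2; omega

lemma Qset_succ (n : ℕ) :
    Qset (n + 1) = (fun t => LStep.down :: LStep.up :: t) '' Pset n ∪
      (fun t => LStep.up :: LStep.down :: t) '' Qset n := by
  ext l
  constructor
  · rintro ⟨h, a, t, rfl, ha⟩
    rcases frob_shape h with h0 | ⟨t', ht'⟩ | ⟨t', ht'⟩ | ⟨t', ht'⟩
    · simp at h0
    · exact absurd (List.head_eq_of_cons_eq ht') ha
    · left; exact ⟨t', (frob_du_cons.1 (ht' ▸ h)), ht'.symm⟩
    · right
      obtain ⟨hf, b, r, rfl, hb⟩ := frob_ud_cons.1 (ht' ▸ h)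
      exact ⟨b :: r, ⟨hf, b, r, rfl, hb⟩, ht'.symm⟩
  · rintro (⟨t, ht, rfl⟩ | ⟨t, ht, rfl⟩)
    · exact ⟨frob_du_cons.2 ht, _, _, rfl, by simp⟩
    · exact ⟨frob_ud_cons.2 ⟨ht.1, ht.2⟩, _, _, rfl, by simp⟩

lemma Pset_succ (n : ℕ) :
    Pset (n + 1) = (List.cons LStep.flat) '' Pset n ∪ Qset (n + 1) := by
  ext l
  constructor
  · intro h
    rcases frob_shape h with h0 | ⟨t, rfl⟩ | ⟨t, rfl⟩ | ⟨t, rfl⟩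
    · exfalso
      subst h0
      exact Nat.succ_ne_zero n (frob_nil.1 h)
    · exact Or.inl ⟨t, frob_flat_cons.1 h, rfl⟩
    · exact Or.inr ⟨h, _, _, rfl, by simp⟩
    · exact Or.inr ⟨h, _, _, rfl, by simp⟩
  · rintro (⟨t, ht, rfl⟩ | h)
    · exact frob_flat_cons.2 ht
    · exact h.1

noncomputable def sFn (n : ℕ) : ℕ := (Pset n).ncard
noncomputable def qFn (n : ℕ) : ℕ := (Qset n).ncard

lemma qFn_succ (n : ℕ) : qFn (n + 1) = sFn n + qFn n := by
  have inj1 : Function.Injective (fun t : List LStep => LStep.down :: LStep.up :: t) := by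
    intro a b h; simpa using h
  have inj2 : Function.Injective (fun t : List LStep => LStep.up :: LStep.down :: t) := by
    intro a b h; simpa using h
  have hdisj : Disjoint ((fun t => LStep.down :: LStep.up :: t) '' Pset n)
      ((fun t => LStep.up :: LStep.down :: t) '' Qset n) := by
    rw [Set.disjoint_left]
    rintro x ⟨a, -, rfl⟩ ⟨b, -, h⟩
    simp at h
  rw [qFn, Qset_succ, Set.ncard_union_eq hdisj ((Pset_finite n).image _)
    ((Qset_finite n).image _), Set.ncard_image_of_injective _ inj1,
    Set.ncard_image_of_injective _ inj2]
  rfl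

lemma sFn_succ (n : ℕ) : sFn (n + 1) = sFn n + qFn (n + 1) := by
  have inj1 : Function.Injective (List.cons LStep.flat) := by
    intro a b h; simpa using h
  have hdisj : Disjoint ((List.cons LStep.flat) '' Pset n) (Qset (n + 1)) := by
    rw [Set.disjoint_left]
    rintro x ⟨a, -, rfl⟩ ⟨-, b, t, heq, hb⟩
    exact hb (List.head_eq_of_cons_eq heq.symm)
  rw [sFn, Pset_succ, Set.ncard_union_eq hdisj ((Pset_finite n).image _) (Qset_finite (n + 1)),
    Set.ncard_image_of_injective _ inj1]
  rfl

lemma sFn_zero : sFn 0 = 1 := by rw [sFn, Pset_zero, Set.ncard_singleton]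

lemma qFn_zero : qFn 0 = 0 := by rw [qFn, Qset_zero, Set.ncard_empty]

lemma sFn_key (n : ℕ) : sFn (n + 2) + sFn n = 3 * sFn (n + 1) := by
  have h1 : sFn (n + 2) = sFn (n + 1) + qFn (n + 2) := sFn_succ (n + 1)
  have h2 : qFn (n + 2) = sFn (n + 1) + qFn (n + 1) := qFn_succ (n + 1)
  have h3 : sFn (n + 1) = sFn n + qFn (n + 1) := sFn_succ n
  omega

lemma sFn_fib : ∀ n : ℕ, sFn n = Nat.fib (2 * n + 1) := by
  intro n
  induction n using Nat.strong_induction_on with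
  | _ n ih =>
    match n with
    | 0 => simpa using sFn_zero
    | 1 =>
      have : sFn 1 = 2 := by
        have h1 : sFn 1 = sFn 0 + qFn 1 := sFn_succ 0
        have h2 : qFn 1 = sFn 0 + qFn 0 := qFn_succ 0
        have h3 := sFn_zero
        have h4 := qFn_zero
        omega
      rw [this]; rfl
    | (m + 2) =>
      have h1 := ih (m + 1) (by omega)
      have h2 := ih m (by omega)
      have h3 := sFn_key m
      have hfib : Nat.fib (2 * m + 5) + Nat.fib (2 * m + 1) = 3 * Nat.fib (2 * m + 3) := by
        have e1 : Nat.fib (2 * m + 5) = Nat.fib (2 * m + 3) + Nat.fib (2 * m + 4) := by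
          rw [show 2 * m + 5 = 2 * m + 3 + 2 from by ring]; exact Nat.fib_add_two
        have e2 : Nat.fib (2 * m + 4) = Nat.fib (2 * m + 2) + Nat.fib (2 * m + 3) := by
          rw [show 2 * m + 4 = 2 * m + 2 + 2 from by ring]; exact Nat.fib_add_two
        have e3 : Nat.fib (2 * m + 3) = Nat.fib (2 * m + 1) + Nat.fib (2 * m + 2) := by
          rw [show 2 * m + 3 = 2 * m + 1 + 2 from by ring]; exact Nat.fib_add_two
        omega
      rw [show 2 * (m + 2) + 1 = 2 * m + 5 by ring]
      rw [show 2 * (m + 1) + 1 = 2 * m + 3 by ring] at h1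
      omega


/-- the number `S n` of such paths satisfies
`S n = 3 S (n-1) - S (n-2)` for `n ≥ 2`, and `S n = F (2n+1)`. -/
theorem stmt11 (S : ℕ → ℕ)
    (hS : ∀ n : ℕ, S n = Nat.card {l : List LStep // IsOddFrobenius n l}) :
    (∀ n : ℕ, 2 ≤ n → (S n : ℤ) = 3 * S (n - 1) - S (n - 2)) ∧
    (∀ n : ℕ, S n = Nat.fib (2 * n + 1)) := by
  have hSs : ∀ n : ℕ, S n = sFn n := by
    intro n
    rw [hS n]
    exact Nat.card_coe_set_eq (Pset n)
  constructor
  · intro n hn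
    obtain ⟨m, rfl⟩ : ∃ m, n = m + 2 := ⟨n - 2, by omega⟩
    have e1 : m + 2 - 1 = m + 1 := rfl
    have e2 : m + 2 - 2 = m := rfl
    rw [e1, e2, hSs, hSs, hSs]
    have := sFn_key m
    omega
  · intro n
    rw [hSs, sFn_fib]
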